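/- Let K : ℝ^d → ℝ be a shift-invariant kernel with K(0) = 1 admitting a Bochner representation with probability density p, and suppose p has finite second moment and ∫_{ℝ^d} ⟨ω, u⟩² p(ω) dω > 0 for every nonzero u ∈ ℝ^d. Then there exist constants c_K, R_K > 0 such that for every x with 0 < ‖x‖₁ ≤ R_K: (1 − K(x))/‖x‖₁² ≥ c_K/2. -/

import Mathlib

/-!
By Bochner, `1 - K x = ∫ (1 - cos ⟪ω, x⟫) dp(ω)`, and `1 - cos t ≥ 2 t² / π²` for `|t| ≤ π`.
The second-moment form `Q x = ∫ ⟪ω, x⟫² dp` is positive definite and continuous, so its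
minimum `c` on the unit sphere gives `Q x ≥ c ‖x‖²`. Choose `M` with
`∫_{‖ω‖ > M} ‖ω‖² dp ≤ c / 2`; then the part of `Q x` coming from `‖ω‖ ≤ M` is still at least
`c ‖x‖² / 2`, and for `‖x‖ ≤ π / M` all those phases `⟪ω, x⟫` lie in `[-π, π]`. Hence
`1 - K x ≥ c ‖x‖² / π²` near the origin, and `‖x‖₁² ≤ d ‖x‖²` converts this to the `ℓ₁` norm.
-/

open MeasureTheory

noncomputable section

/-- The ℓ₁ norm on `ℝ^d`. -/
def l1 {d : ℕ} (x : EuclideanSpace ℝ (Fin d)) : ℝ := ∑ i, |x i|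

open Metric Filter Real
open scoped RealInnerProductSpace

lemma norm_le_l1 {d : ℕ} (x : EuclideanSpace ℝ (Fin d)) : ‖x‖ ≤ l1 x := by
  have hsq : ‖x‖ ^ 2 ≤ l1 x ^ 2 := by
    simpa [EuclideanSpace.norm_sq_eq, l1] using
      Finset.sum_sq_le_sq_sum_of_nonneg (s := Finset.univ) (f := fun i => |x i|)
        fun i _ => abs_nonneg _
  exact le_of_sq_le_sq hsq (Finset.sum_nonneg fun i _ => abs_nonneg _)

lemma l1_sq_le_card_mul_norm_sq {d : ℕ} (x : EuclideanSpace ℝ (Fin d)) :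
    l1 x ^ 2 ≤ d * ‖x‖ ^ 2 := by
  simpa [EuclideanSpace.norm_sq_eq, l1] using
    sq_sum_le_card_mul_sum_sq (s := Finset.univ) (f := fun i => |x i|)

lemma real_inner_sq_le_norm_sq_mul_norm_sq {E : Type*} [NormedAddCommGroup E]
    [InnerProductSpace ℝ E] (x y : E) : ⟪x, y⟫ ^ 2 ≤ ‖x‖ ^ 2 * ‖y‖ ^ 2 := by
  simpa [mul_pow, sq_abs] using pow_le_pow_left₀ (abs_nonneg _) (abs_real_inner_le_norm x y) 2

lemma MeasureTheory.Integrable.exists_setIntegral_compl_closedBall_le {X : Type*}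
    [PseudoMetricSpace X] [MeasurableSpace X] [OpensMeasurableSpace X] {μ : Measure X} {f : X → ℝ}
    (hf : Integrable f μ) (x₀ : X) {ε : ℝ} (hε : 0 < ε) :
    ∃ M > (0 : ℝ), ∫ x in (closedBall x₀ M)ᶜ, f x ∂μ ≤ ε := by
  have hempty : ⋂ n : ℕ, (closedBall x₀ n)ᶜ = ∅ := by
    simp only [← Set.compl_iUnion, Set.compl_empty_iff, Set.eq_univ_iff_forall, Set.mem_iUnion,
      mem_closedBall]
    exact fun x => exists_nat_ge _
  have htail := tendsto_setIntegral_of_antitone (μ := μ) (f := f)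
    (s := fun n : ℕ => (closedBall x₀ n)ᶜ) (fun n => measurableSet_closedBall.compl)
    (fun m n hmn => Set.compl_subset_compl.mpr
      (closedBall_subset_closedBall (Nat.cast_le.mpr hmn)))
    ⟨0, hf.integrableOn⟩
  rw [hempty, setIntegral_empty] at htail
  obtain ⟨n, hn, hn1⟩ := ((htail.eventually (eventually_le_nhds hε)).and
    (eventually_ge_atTop 1)).exists
  exact ⟨n, by exact_mod_cast hn1, hn⟩

lemma two_div_pi_sq_mul_setIntegral_sq_le_integral_one_sub_cos {X : Type*} [MeasurableSpace X]
    {μ : Measure X} [IsFiniteMeasure μ] {g : X → ℝ} {S : Set X} (hS : MeasurableSet S)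
    (hg : AEStronglyMeasurable g μ) (hg2 : Integrable (fun w => g w ^ 2) μ)
    (hbound : ∀ w ∈ S, |g w| ≤ π) :
    2 / π ^ 2 * ∫ w in S, g w ^ 2 ∂μ ≤ ∫ w, (1 - cos (g w)) ∂μ := by
  have hint : Integrable (fun w => 1 - cos (g w)) μ :=
    (integrable_const 1).sub (Integrable.of_bound (continuous_cos.comp_aestronglyMeasurable hg) 1
      (.of_forall fun w => abs_cos_le_one _))
  calc 2 / π ^ 2 * ∫ w in S, g w ^ 2 ∂μ = ∫ w in S, 2 / π ^ 2 * g w ^ 2 ∂μ :=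
        (integral_const_mul _ _).symm
    _ ≤ ∫ w in S, (1 - cos (g w)) ∂μ :=
        setIntegral_mono_on (hg2.const_mul _).integrableOn hint.integrableOn hS fun w hw => by
          linarith [cos_le_one_sub_mul_cos_sq (hbound w hw)]
    _ ≤ ∫ w, (1 - cos (g w)) ∂μ :=
        setIntegral_le_integral hint (.of_forall fun w => sub_nonneg.mpr (cos_le_one _))

section SecondMoment

variable {E : Type*} [NormedAddCommGroup E] [InnerProductSpace ℝ E] [MeasurableSpace E]
  [BorelSpace E] {μ : Measure E}

lemma integrable_inner_sq (hmom : Integrable (fun w => ‖w‖ ^ 2) μ) (x : E) :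
    Integrable (fun w => ⟪w, x⟫ ^ 2) μ :=
  (hmom.mul_const (‖x‖ ^ 2)).mono' (by fun_prop) (.of_forall fun w => by
    simpa using real_inner_sq_le_norm_sq_mul_norm_sq w x)

omit [BorelSpace E] in
lemma integral_inner_smul_sq (r : ℝ) (x : E) :
    ∫ w, ⟪w, r • x⟫ ^ 2 ∂μ = r ^ 2 * ∫ w, ⟪w, x⟫ ^ 2 ∂μ := by
  simp_rw [real_inner_smul_right, mul_pow]
  exact integral_const_mul _ _

lemma continuousOn_integral_inner_sq_closedBall (hmom : Integrable (fun w => ‖w‖ ^ 2) μ) :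
    ContinuousOn (fun x => ∫ w, ⟪w, x⟫ ^ 2 ∂μ) (closedBall 0 1) := by
  refine continuousOn_of_dominated (fun x _ => (integrable_inner_sq hmom x).aestronglyMeasurable)
    (fun x hx => .of_forall fun w => ?_) hmom (.of_forall fun w => by fun_prop)
  have hx : ‖x‖ ^ 2 ≤ 1 := pow_le_one₀ (norm_nonneg x) (by simpa using hx)
  calc ‖⟪w, x⟫ ^ 2‖ ≤ ‖w‖ ^ 2 * ‖x‖ ^ 2 := by
        simpa using real_inner_sq_le_norm_sq_mul_norm_sq w x
    _ ≤ ‖w‖ ^ 2 := mul_le_of_le_one_right (by positivity) hx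

lemma exists_pos_mul_norm_sq_le_integral_inner_sq [FiniteDimensional ℝ E]
    (hmom : Integrable (fun w => ‖w‖ ^ 2) μ)
    (hnondeg : ∀ u : E, u ≠ 0 → 0 < ∫ w, ⟪w, u⟫ ^ 2 ∂μ) :
    ∃ c > (0 : ℝ), ∀ x : E, c * ‖x‖ ^ 2 ≤ ∫ w, ⟪w, x⟫ ^ 2 ∂μ := by
  rcases subsingleton_or_nontrivial E with hE | hE
  · exact ⟨1, one_pos, fun x => by simp [Subsingleton.elim x 0]⟩
  obtain ⟨u₀, hu₀, hmin⟩ := (isCompact_sphere (0 : E) 1).exists_isMinOn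
    (NormedSpace.sphere_nonempty.mpr zero_le_one)
    ((continuousOn_integral_inner_sq_closedBall hmom).mono sphere_subset_closedBall)
  refine ⟨_, hnondeg u₀ (ne_zero_of_mem_unit_sphere ⟨u₀, hu₀⟩), fun x => ?_⟩
  rcases eq_or_ne x 0 with rfl | hx
  · simp
  have hnx : 0 < ‖x‖ := norm_pos_iff.mpr hx
  have hunit : ‖x‖⁻¹ • x ∈ sphere (0 : E) 1 := by
    simp [norm_smul, hnx.ne']
  calc (∫ w, ⟪w, u₀⟫ ^ 2 ∂μ) * ‖x‖ ^ 2
      ≤ (∫ w, ⟪w, ‖x‖⁻¹ • x⟫ ^ 2 ∂μ) * ‖x‖ ^ 2 :=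
          mul_le_mul_of_nonneg_right (hmin hunit) (by positivity)
    _ = ∫ w, ⟪w, x⟫ ^ 2 ∂μ := by
        rw [integral_inner_smul_sq]; field_simp

lemma half_mul_norm_sq_le_setIntegral_inner_sq (hmom : Integrable (fun w => ‖w‖ ^ 2) μ)
    {c M : ℝ} (hQ : ∀ x : E, c * ‖x‖ ^ 2 ≤ ∫ w, ⟪w, x⟫ ^ 2 ∂μ)
    (htail : ∫ w in (closedBall 0 M)ᶜ, ‖w‖ ^ 2 ∂μ ≤ c / 2) (x : E) :
    c / 2 * ‖x‖ ^ 2 ≤ ∫ w in closedBall 0 M, ⟪w, x⟫ ^ 2 ∂μ := by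
  have hcompl : ∫ w in (closedBall 0 M)ᶜ, ⟪w, x⟫ ^ 2 ∂μ ≤ c / 2 * ‖x‖ ^ 2 :=
    calc ∫ w in (closedBall 0 M)ᶜ, ⟪w, x⟫ ^ 2 ∂μ
        ≤ ∫ w in (closedBall 0 M)ᶜ, ‖w‖ ^ 2 * ‖x‖ ^ 2 ∂μ :=
          setIntegral_mono (integrable_inner_sq hmom x).integrableOn
            (hmom.mul_const _).integrableOn (real_inner_sq_le_norm_sq_mul_norm_sq · x)
      _ = (∫ w in (closedBall 0 M)ᶜ, ‖w‖ ^ 2 ∂μ) * ‖x‖ ^ 2 := integral_mul_const _ _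
      _ ≤ c / 2 * ‖x‖ ^ 2 := by gcongr
  have hsplit := integral_add_compl (measurableSet_closedBall (x := (0 : E)) (ε := M))
    (integrable_inner_sq hmom x)
  linarith [hQ x]

lemma exists_mul_norm_sq_le_integral_one_sub_cos [IsFiniteMeasure μ]
    (hmom : Integrable (fun w => ‖w‖ ^ 2) μ) {c : ℝ} (hc : 0 < c)
    (hQ : ∀ x : E, c * ‖x‖ ^ 2 ≤ ∫ w, ⟪w, x⟫ ^ 2 ∂μ) :
    ∃ R > (0 : ℝ), ∀ x : E, ‖x‖ ≤ R → c / π ^ 2 * ‖x‖ ^ 2 ≤ ∫ w, (1 - cos ⟪w, x⟫) ∂μ := by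
  obtain ⟨M, hM, htail⟩ := hmom.exists_setIntegral_compl_closedBall_le 0 (half_pos hc)
  refine ⟨π / M, by positivity, fun x hx => ?_⟩
  have hphase : ∀ w ∈ closedBall (0 : E) M, |⟪w, x⟫| ≤ π := fun w hw =>
    calc |⟪w, x⟫| ≤ ‖w‖ * ‖x‖ := abs_real_inner_le_norm w x
      _ ≤ M * (π / M) := by gcongr; simpa using hw
      _ = π := mul_div_cancel₀ π hM.ne'
  calc c / π ^ 2 * ‖x‖ ^ 2 = 2 / π ^ 2 * (c / 2 * ‖x‖ ^ 2) := by ring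
    _ ≤ 2 / π ^ 2 * ∫ w in closedBall 0 M, ⟪w, x⟫ ^ 2 ∂μ := by
        gcongr; exact half_mul_norm_sq_le_setIntegral_inner_sq hmom hQ htail x
    _ ≤ ∫ w, (1 - cos ⟪w, x⟫) ∂μ :=
        two_div_pi_sq_mul_setIntegral_sq_le_integral_one_sub_cos measurableSet_closedBall
          (by fun_prop) (integrable_inner_sq hmom x) hphase

end SecondMoment

theorem kernel_strongly_convex_near_origin_general {d : ℕ}
    (K : EuclideanSpace ℝ (Fin d) → ℝ)
    (μp : Measure (EuclideanSpace ℝ (Fin d))) [IsProbabilityMeasure μp]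
    (hBochner : ∀ x, K x = ∫ w, Real.cos (inner ℝ w x : ℝ) ∂μp)
    (hmom : Integrable (fun w => ‖w‖^2) μp)
    (hnondeg : ∀ u : EuclideanSpace ℝ (Fin d), u ≠ 0 →
      0 < ∫ w, (inner ℝ w u : ℝ)^2 ∂μp) :
    ∃ cK > (0:ℝ), ∃ RK > (0:ℝ), ∀ x : EuclideanSpace ℝ (Fin d),
      0 < l1 x → l1 x ≤ RK → (1 - K x) / (l1 x)^2 ≥ cK / 2 := by
  obtain ⟨c, hc, hQ⟩ := exists_pos_mul_norm_sq_le_integral_inner_sq hmom hnondeg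
  obtain ⟨R, hR, hcos⟩ := exists_mul_norm_sq_le_integral_one_sub_cos hmom hc hQ
  -- `d + 1` rather than `d`: with `d = 0` the constant `c / d` would be the junk value `0`.
  refine ⟨2 * c / (π ^ 2 * (d + 1)), by positivity, R, hR, fun x hx hxR => ?_⟩
  have hK : 1 - K x = ∫ w, (1 - cos ⟪w, x⟫) ∂μp := by
    rw [hBochner, integral_sub (integrable_const 1) (Integrable.of_bound (by fun_prop) 1
      (.of_forall fun w => abs_cos_le_one _)), integral_const, probReal_univ, one_smul]
  rw [ge_iff_le, le_div_iff₀ (by positivity), hK]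
  calc 2 * c / (π ^ 2 * (d + 1)) / 2 * l1 x ^ 2
      ≤ 2 * c / (π ^ 2 * (d + 1)) / 2 * (d * ‖x‖ ^ 2) := by
        gcongr; exact l1_sq_le_card_mul_norm_sq x
    _ = c / π ^ 2 * ‖x‖ ^ 2 * (d / (d + 1)) := by field_simp
    _ ≤ c / π ^ 2 * ‖x‖ ^ 2 :=
        mul_le_of_le_one_right (by positivity) (div_le_one_of_le₀ (by linarith) (by positivity))
    _ ≤ ∫ w, (1 - cos ⟪w, x⟫) ∂μp := hcos x ((norm_le_l1 x).trans hxR)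

/-- strong convexity of `1 - K` near the origin. If `K` admits a Bochner
representation with a probability measure `μp` having finite second moment and non-degenerate
second moments in every direction, then there exist `c_K, R_K > 0` such that
`(1 - K(x))/‖x‖₁² ≥ c_K/2` for all `0 < ‖x‖₁ ≤ R_K`. -/
theorem kernel_strongly_convex_near_origin {d : ℕ}
    (K : EuclideanSpace ℝ (Fin d) → ℝ) (hK0 : K 0 = 1)
    (μp : Measure (EuclideanSpace ℝ (Fin d))) [IsProbabilityMeasure μp]
    (hBochner : ∀ x, K x = ∫ w, Real.cos (inner ℝ w x : ℝ) ∂μp)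
    (hmom : Integrable (fun w => ‖w‖^2) μp)
    (hnondeg : ∀ u : EuclideanSpace ℝ (Fin d), u ≠ 0 →
      0 < ∫ w, (inner ℝ w u : ℝ)^2 ∂μp) :
    ∃ cK > (0:ℝ), ∃ RK > (0:ℝ), ∀ x : EuclideanSpace ℝ (Fin d),
      0 < l1 x → l1 x ≤ RK → (1 - K x) / (l1 x)^2 ≥ cK / 2 :=
  kernel_strongly_convex_near_origin_general K μp hBochner hmom hnondeg
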